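/- arXiv:2008.02607 — 8 statements merged into one kernel-verified Lean document; each statement's English description precedes it below -/
import Mathlib

section
/- Let C̃ be a labeled causet (a partial order on a finite or countable downward-closed subset of ℕ, locally finite, with x ≺ y implying x < y) and let Ã be a finite stem in C̃. If C̃ contains a break with past Ã (i.e., every element of C̃ \ Ã is above every element of Ã), then every stem of C̃ of cardinality |Ã| + 1 is order-isomorphic to the covering causet of Ã (the causet formed from Ã by adding one new element above every element of Ã). -/
/-- A labeled causet: a partial order on a downward-closed (initial-segment)
subset of ℕ, with the order compatible with the natural-number labels
(`rel x y → x < y`, which also gives local finiteness). -/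
structure LCauset where
  carrier : Set ℕ
  rel : ℕ → ℕ → Prop
  mem_left : ∀ {x y}, rel x y → x ∈ carrier
  mem_right : ∀ {x y}, rel x y → y ∈ carrier
  trans' : ∀ {x y z}, rel x y → rel y z → rel x z
  label_lt : ∀ {x y}, rel x y → x < y
  initialSeg : ∀ {x y : ℕ}, y ∈ carrier → x < y → x ∈ carrier

/-- A stem: a finite downward-closed subset of the causet. -/
def LCauset.IsStem (C : LCauset) (S : Finset ℕ) : Prop :=
  ↑S ⊆ C.carrier ∧ ∀ x y : ℕ, y ∈ S → C.rel x y → x ∈ S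

/-- `C` contains a break with past `A`: `A` is a stem, the complement is
nonempty, and every element of `A` precedes every element of the complement. -/
def LCauset.BreakPast (C : LCauset) (A : Finset ℕ) : Prop :=
  C.IsStem A ∧ (∃ b ∈ C.carrier, b ∉ A) ∧
    ∀ a ∈ A, ∀ b ∈ C.carrier, b ∉ A → C.rel a b

/-- `T` (a subset of `C`) is order-isomorphic to the covering causet of `A`:
there is an element `t ∈ T` above all other elements of `T`, and an
order-isomorphism between `A` and `T \ {t}` (all with the induced order). -/
def LCauset.IsoToCover (C : LCauset) (A T : Finset ℕ) : Prop :=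
  ∃ t ∈ T, (∀ s ∈ T, s ≠ t → C.rel s t) ∧
    ∃ g : ℕ → ℕ, Set.BijOn g ↑A ↑(T.erase t) ∧
      ∀ a ∈ A, ∀ b ∈ A, (C.rel a b ↔ C.rel (g a) (g b))

/-- If a labeled causet contains a break with past `Ã`, then every stem of
cardinality `|Ã| + 1` is order-isomorphic to the covering causet of `Ã`. -/
theorem break_implies_all_succ_stems_iso_cover (C : LCauset) (A : Finset ℕ)
    (hbrk : C.BreakPast A) (T : Finset ℕ) (hT : C.IsStem T)
    (hcard : T.card = A.card + 1) : C.IsoToCover A T := by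
  obtain ⟨hAstem, _, hrel⟩ := hbrk
  have hTA : ¬ (T ⊆ A) := fun h => by
    have := Finset.card_le_card h; omega
  obtain ⟨b, hbT, hbA⟩ := Finset.not_subset.mp hTA
  have hbC : b ∈ C.carrier := hT.1 hbT
  have hAT' : A ⊆ T := fun a ha => hT.2 a b hbT (hrel a ha b hbC hbA)
  have hins : T = insert b A := by
    refine (Finset.eq_of_subset_of_card_le ?_ ?_).symm
    · intro x hx
      rcases Finset.mem_insert.mp hx with h | h
      · exact h ▸ hbT
      · exact hAT' h
    · rw [Finset.card_insert_of_notMem hbA]; omega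
  refine ⟨b, hbT, ?_, id, ?_, fun a _ b' _ => Iff.rfl⟩
  · intro s hsT hsb
    have hsA : s ∈ A := by
      rw [hins] at hsT
      rcases Finset.mem_insert.mp hsT with h | h
      · exact absurd h hsb
      · exact h
    exact hrel s hsA b hbC hbA
  · have hE : T.erase b = A := by
      rw [hins, Finset.erase_insert hbA]
    rw [hE]
    exact ⟨Set.mapsTo_id _, Set.injOn_id _, by simp [Set.surjOn_id]⟩
end

section
/- Let C̃ be a labeled causet and Ã a finite stem in C̃ of cardinality n. If every (n+1)-stem of C̃ is order-isomorphic to the covering causet of Ã, then Ã is the unique n-stem of C̃ (i.e., any stem of cardinality n equals Ã as a subset). -/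
/-- A stem contained in a bigger stem can be extended inside it, one element
at a time, to any intermediate cardinality. -/
lemma LCauset.extend_stem (C : LCauset) :
    ∀ m (S U : Finset ℕ), C.IsStem S → C.IsStem U → S ⊆ U →
      S.card + m ≤ U.card →
      ∃ T, C.IsStem T ∧ S ⊆ T ∧ T ⊆ U ∧ T.card = S.card + m := by
  intro m
  induction m with
  | zero => intro S U hS _ hSU _; exact ⟨S, hS, subset_rfl, hSU, rfl⟩
  | succ m ih =>
    intro S U hS hU hSU hcard
    have hne : (U \ S).Nonempty := by
      rw [← Finset.card_pos, Finset.card_sdiff_of_subset hSU]; omega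
    set b := (U \ S).min' hne with hb
    have hbUS : b ∈ U \ S := Finset.min'_mem _ hne
    have hbU : b ∈ U := (Finset.mem_sdiff.mp hbUS).1
    have hbS : b ∉ S := (Finset.mem_sdiff.mp hbUS).2
    have hS' : C.IsStem (insert b S) := by
      constructor
      · intro x hx
        simp only [Finset.coe_insert, Set.mem_insert_iff] at hx
        rcases hx with rfl | hx
        · exact hU.1 hbU
        · exact hS.1 hx
      · intro x y hy hr
        rw [Finset.mem_insert] at hy ⊢
        rcases hy with rfl | hy
        · by_cases hxS : x ∈ S
          · exact Or.inr hxS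
          · have hxU : x ∈ U := hU.2 x b hbU hr
            have h1 : b ≤ x := Finset.min'_le _ x (Finset.mem_sdiff.mpr ⟨hxU, hxS⟩)
            have h2 := C.label_lt hr
            omega
        · exact Or.inr (hS.2 x y hy hr)
    have hsub : insert b S ⊆ U := Finset.insert_subset hbU hSU
    have hc : (insert b S).card = S.card + 1 := Finset.card_insert_of_notMem hbS
    obtain ⟨T, hT, hST, hTU, hTc⟩ := ih (insert b S) U hS' hU hsub (by omega)
    exact ⟨T, hT, (Finset.subset_insert b S).trans hST, hTU, by omega⟩

/-- If `Ã` is a stem and every `(|Ã|+1)`-stem of `C̃` is order-isomorphic to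
the covering causet of `Ã`, then `Ã` is the unique `|Ã|`-stem of `C̃`. -/
theorem all_succ_stems_iso_cover_implies_unique_stem (C : LCauset) (A : Finset ℕ)
    (hA : C.IsStem A)
    (h : ∀ T : Finset ℕ, C.IsStem T → T.card = A.card + 1 → C.IsoToCover A T) :
    ∀ D : Finset ℕ, C.IsStem D → D.card = A.card → D = A := by
  intro D hD hcard
  by_contra hne
  have hAD : (A \ D).Nonempty := by
    rw [Finset.sdiff_nonempty]
    intro hsub
    exact hne (Finset.eq_of_subset_of_card_le hsub (le_of_eq hcard)).symm
  have hDA : (D \ A).Nonempty := by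
    rw [Finset.sdiff_nonempty]
    intro hsub
    exact hne (Finset.eq_of_subset_of_card_le hsub (ge_of_eq hcard))
  set a := (A \ D).min' hAD with ha
  set d := (D \ A).min' hDA with hd
  have haAD : a ∈ A \ D := Finset.min'_mem _ hAD
  have hdDA : d ∈ D \ A := Finset.min'_mem _ hDA
  have haA : a ∈ A := (Finset.mem_sdiff.mp haAD).1
  have haD : a ∉ D := (Finset.mem_sdiff.mp haAD).2
  have hdD : d ∈ D := (Finset.mem_sdiff.mp hdDA).1
  have hdA : d ∉ A := (Finset.mem_sdiff.mp hdDA).2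
  have had : a ≠ d := fun heq => hdA (heq ▸ haA)
  -- the starting stem: a, d, and the common part
  set S : Finset ℕ := insert a (insert d (A ∩ D)) with hSdef
  have hS : C.IsStem S := by
    constructor
    · intro x hx
      simp only [hSdef, Finset.coe_insert, Set.mem_insert_iff, Finset.coe_inter,
        Set.mem_inter_iff, Finset.mem_coe] at hx
      rcases hx with rfl | rfl | ⟨hx, _⟩
      · exact hA.1 haA
      · exact hD.1 hdD
      · exact hA.1 hx
    · intro x y hy hr
      simp only [hSdef, Finset.mem_insert, Finset.mem_inter] at hy ⊢
      rcases hy with rfl | rfl | ⟨hy1, hy2⟩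
      · have hxA : x ∈ A := hA.2 x a haA hr
        by_cases hxD : x ∈ D
        · exact Or.inr (Or.inr ⟨hxA, hxD⟩)
        · have h1 : a ≤ x := Finset.min'_le _ x (Finset.mem_sdiff.mpr ⟨hxA, hxD⟩)
          have h2 := C.label_lt hr
          omega
      · have hxD : x ∈ D := hD.2 x d hdD hr
        by_cases hxA : x ∈ A
        · exact Or.inr (Or.inr ⟨hxA, hxD⟩)
        · have h1 : d ≤ x := Finset.min'_le _ x (Finset.mem_sdiff.mpr ⟨hxD, hxA⟩)
          have h2 := C.label_lt hr
          omega
      · exact Or.inr (Or.inr ⟨hA.2 x y hy1 hr, hD.2 x y hy2 hr⟩)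
  have haS : a ∈ S := Finset.mem_insert_self _ _
  have hdS : d ∈ S := Finset.mem_insert_of_mem (Finset.mem_insert_self _ _)
  -- cardinality of S
  have hdnot : d ∉ A ∩ D := fun hx => hdA (Finset.mem_inter.mp hx).1
  have hanot : a ∉ insert d (A ∩ D) := by
    rw [Finset.mem_insert]
    rintro (heq | hx)
    · exact had heq
    · exact haD (Finset.mem_inter.mp hx).2
  have hScard : S.card = (A ∩ D).card + 2 := by
    rw [hSdef, Finset.card_insert_of_notMem hanot, Finset.card_insert_of_notMem hdnot]
  have hADcard : (A ∩ D).card + 1 ≤ A.card := by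
    have hsub : A ∩ D ⊆ A.erase a := by
      intro x hx
      rw [Finset.mem_erase]
      exact ⟨fun heq => haD (heq ▸ (Finset.mem_inter.mp hx).2), (Finset.mem_inter.mp hx).1⟩
    have := Finset.card_le_card hsub
    rw [Finset.card_erase_of_mem haA] at this
    have hApos : 0 < A.card := Finset.card_pos.mpr ⟨a, haA⟩
    omega
  -- the big stem A ∪ D
  have hU : C.IsStem (A ∪ D) := by
    constructor
    · intro x hx
      simp only [Finset.coe_union, Set.mem_union, Finset.mem_coe] at hx
      rcases hx with hx | hx
      · exact hA.1 hx
      · exact hD.1 hx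
    · intro x y hy hr
      rw [Finset.mem_union] at hy ⊢
      rcases hy with hy | hy
      · exact Or.inl (hA.2 x y hy hr)
      · exact Or.inr (hD.2 x y hy hr)
  have hUcard : A.card + 1 ≤ (A ∪ D).card := by
    have h1 : (D \ A).card + A.card = (D ∪ A).card := Finset.card_sdiff_add_card D A
    have h2 : 0 < (D \ A).card := Finset.card_pos.mpr hDA
    rw [Finset.union_comm] at h1
    omega
  have hSU : S ⊆ A ∪ D := by
    intro x hx
    simp only [hSdef, Finset.mem_insert, Finset.mem_inter] at hx
    rw [Finset.mem_union]
    rcases hx with rfl | rfl | ⟨hx1, _⟩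
    · exact Or.inl haA
    · exact Or.inr hdD
    · exact Or.inl hx1
  -- extend S to an (n+1)-stem inside A ∪ D
  obtain ⟨T, hT, hST, hTU, hTc⟩ :=
    C.extend_stem (A.card + 1 - S.card) S (A ∪ D) hS hU hSU (by omega)
  have hTcard : T.card = A.card + 1 := by omega
  -- apply the hypothesis
  obtain ⟨t, htT, htop, -⟩ := h T hT hTcard
  have haT : a ∈ T := hST haS
  have hdT : d ∈ T := hST hdS
  have htU : t ∈ A ∪ D := hTU htT
  by_cases hta : t = a
  · have htA : t ∈ A := by rw [hta]; exact haA
    have hr : C.rel d t := htop d hdT (fun heq => had (heq.trans hta).symm)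
    exact hdA (hA.2 d t htA hr)
  · by_cases htd : t = d
    · have htD : t ∈ D := by rw [htd]; exact hdD
      have hr : C.rel a t := htop a haT (fun heq => had (heq.trans htd))
      exact haD (hD.2 a t htD hr)
    · have hra : C.rel a t := htop a haT (fun heq => hta heq.symm)
      have hrd : C.rel d t := htop d hdT (fun heq => htd heq.symm)
      rw [Finset.mem_union] at htU
      rcases htU with htA | htD
      · exact hdA (hA.2 d t htA hrd)
      · exact haD (hD.2 a t htD hra)
end

section
/- Let C̃ be a labeled causet and Ã a finite stem in C̃ with Ã ≠ C̃. If Ã is the unique stem of C̃ of cardinality |Ã| (i.e., every downward-closed subset of C̃ of cardinality |Ã| equals Ã), then C̃ contains a break with past Ã: every element of C̃ \ Ã lies above every element of Ã. -/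
lemma stem_erase_max (C : LCauset) (S : Finset ℕ) (hS : C.IsStem S) (h : S.Nonempty) :
    C.IsStem (S.erase (S.max' h)) := by
  constructor
  · exact (Finset.coe_subset.mpr (Finset.erase_subset _ _)).trans hS.1
  · intro x y hy hr
    have hyS := Finset.mem_of_mem_erase hy
    have hxS := hS.2 x y hyS hr
    refine Finset.mem_erase.mpr ⟨?_, hxS⟩
    have h1 := C.label_lt hr
    have h2 := S.le_max' y hyS
    omega

lemma stem_shrink (C : LCauset) : ∀ k (S : Finset ℕ), C.IsStem S → ∀ n, S.card = n + k →
    ∃ D, D ⊆ S ∧ C.IsStem D ∧ D.card = n := by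
  intro k
  induction k with
  | zero => intro S hS n h; exact ⟨S, subset_rfl, hS, by omega⟩
  | succ k ih =>
    intro S hS n h
    have hne : S.Nonempty := Finset.card_pos.mp (by omega)
    have h2 := stem_erase_max C S hS hne
    have hc : (S.erase (S.max' hne)).card = n + k := by
      rw [Finset.card_erase_of_mem (S.max'_mem hne)]; omega
    obtain ⟨D, hDs, hDst, hDc⟩ := ih _ h2 n hc
    exact ⟨D, hDs.trans (Finset.erase_subset _ _), hDst, hDc⟩

lemma stem_grow (C : LCauset) : ∀ k (D S : Finset ℕ), C.IsStem D → C.IsStem S → D ⊆ S →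
    D.card + k ≤ S.card → ∃ E, D ⊆ E ∧ E ⊆ S ∧ C.IsStem E ∧ E.card = D.card + k := by
  intro k
  induction k with
  | zero => intro D S hD hS hsub h; exact ⟨D, subset_rfl, hsub, hD, by omega⟩
  | succ k ih =>
    intro D S hD hS hsub h
    have hne : (S \ D).Nonempty := by
      rw [Finset.sdiff_nonempty]
      intro hc
      have := Finset.card_le_card hc
      omega
    set m := (S \ D).min' hne with hm
    have hmS : m ∈ S \ D := (S \ D).min'_mem hne
    have hmS' : m ∈ S := (Finset.mem_sdiff.mp hmS).1
    have hmD : m ∉ D := (Finset.mem_sdiff.mp hmS).2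
    have hE0 : C.IsStem (insert m D) := by
      constructor
      · intro x hx
        rcases Finset.mem_insert.mp (by exact_mod_cast hx) with rfl | hx'
        · exact hS.1 hmS'
        · exact hD.1 (by exact_mod_cast hx')
      · intro x y hy hr
        rcases Finset.mem_insert.mp hy with rfl | hy'
        · have hxS : x ∈ S := hS.2 x m hmS' hr
          have hxlt := C.label_lt hr
          by_cases hxD : x ∈ D
          · exact Finset.mem_insert_of_mem hxD
          · have : m ≤ x := (S \ D).min'_le x (Finset.mem_sdiff.mpr ⟨hxS, hxD⟩)
            omega
        · exact Finset.mem_insert_of_mem (hD.2 x y hy' hr)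
    have hcard : (insert m D).card = D.card + 1 := Finset.card_insert_of_notMem hmD
    have hsub' : insert m D ⊆ S := Finset.insert_subset hmS' hsub
    obtain ⟨E, h1, h2, h3, h4⟩ := ih (insert m D) S hE0 hS hsub' (by omega)
    exact ⟨E, (Finset.subset_insert _ _).trans h1, h2, h3, by omega⟩

/-- If `Ã` is a stem, `Ã ≠ C̃`, and `Ã` is the unique stem of cardinality
`|Ã|`, then `C̃` contains a break with past `Ã`. -/
theorem unique_stem_implies_break (C : LCauset) (A : Finset ℕ)
    (hA : C.IsStem A) (hne : (↑A : Set ℕ) ≠ C.carrier)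
    (huniq : ∀ D : Finset ℕ, C.IsStem D → D.card = A.card → D = A) :
    C.BreakPast A := by
  classical
  have hex : ∃ b ∈ C.carrier, b ∉ A := by
    obtain ⟨b, hb1, hb2⟩ := Set.exists_of_ssubset (hA.1.ssubset_of_ne hne)
    exact ⟨b, hb1, fun h => hb2 (Finset.mem_coe.mpr h)⟩
  refine ⟨hA, hex, ?_⟩
  intro a ha b hb hbA
  by_contra hrel
  set J : Finset ℕ := insert b ((Finset.range b).filter (fun x => C.rel x b)) with hJdef
  have hbJ : b ∈ J := Finset.mem_insert_self _ _
  have hJmem : ∀ x, x ∈ J → x = b ∨ C.rel x b := by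
    intro x hx
    rcases Finset.mem_insert.mp hx with rfl | hx'
    · exact Or.inl rfl
    · exact Or.inr (Finset.mem_filter.mp hx').2
  have hrelJ : ∀ x, C.rel x b → x ∈ J := by
    intro x hx
    exact Finset.mem_insert_of_mem (Finset.mem_filter.mpr
      ⟨Finset.mem_range.mpr (C.label_lt hx), hx⟩)
  set S : Finset ℕ := A ∪ J with hSdef
  have hAS : A ⊆ S := Finset.subset_union_left
  have hbS : b ∈ S := Finset.mem_union_right _ hbJ
  have hS : C.IsStem S := by
    constructor
    · intro x hx
      rcases Finset.mem_union.mp (by exact_mod_cast hx) with hx' | hx'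
      · exact hA.1 (Finset.mem_coe.mpr hx')
      · rcases hJmem x hx' with rfl | hr
        · exact hb
        · exact C.mem_left hr
    · intro x y hy hr
      rcases Finset.mem_union.mp hy with hy' | hy'
      · exact Finset.mem_union_left _ (hA.2 x y hy' hr)
      · rcases hJmem y hy' with rfl | hr'
        · exact Finset.mem_union_right _ (hrelJ x hr)
        · exact Finset.mem_union_right _ (hrelJ x (C.trans' hr hr'))
  set D : Finset ℕ := S.filter (fun x => ¬(x = a ∨ C.rel a x)) with hDdef
  have hDS : D ⊆ S := Finset.filter_subset _ _
  have hDst : C.IsStem D := by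
    constructor
    · exact (Finset.coe_subset.mpr hDS).trans hS.1
    · intro x y hy hr
      have hy' := Finset.mem_filter.mp hy
      have hxS : x ∈ S := hS.2 x y hy'.1 hr
      refine Finset.mem_filter.mpr ⟨hxS, ?_⟩
      rintro (rfl | hax)
      · exact hy'.2 (Or.inr hr)
      · exact hy'.2 (Or.inr (C.trans' hax hr))
  have haD : a ∉ D := by
    intro h
    exact (Finset.mem_filter.mp h).2 (Or.inl rfl)
  have hbD : b ∈ D := by
    refine Finset.mem_filter.mpr ⟨hbS, ?_⟩
    rintro (rfl | hab)
    · exact hbA ha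
    · exact hrel hab
  rcases le_or_gt A.card D.card with hc | hc
  · obtain ⟨D', hsub, hst, hcard⟩ :=
      stem_shrink C (D.card - A.card) D hDst A.card (by omega)
    have heq := huniq D' hst hcard
    exact haD (hsub (heq ▸ ha))
  · have hAcard : A.card ≤ S.card := Finset.card_le_card hAS
    obtain ⟨E, h1, h2, h3, h4⟩ :=
      stem_grow C (A.card - D.card) D S hDst hS hDS (by omega)
    have heq := huniq E h3 (by omega)
    exact hbA (heq ▸ h1 hbD)
end

section
/- An infinite order C contains an A-break (for a finite order A) if and only if the covering order of A is the unique (|A|+1)-stem of C, i.e., every downward-closed subset of C of cardinality |A|+1 is order-isomorphic to Â, and such a subset exists. -/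
/-- The level of `x`: the cardinality of the longest chain with maximal element `x`. -/
noncomputable def level {α : Type*} [PartialOrder α] (x : α) : ℕ∞ :=
  Set.chainHeight {y | y ≤ x} (· < ·)

/-- `C` contains a break whose past is order-isomorphic to the finite poset `P`. -/
def ContainsBreak (α : Type*) [PartialOrder α] (P : Type*) [PartialOrder P] : Prop :=
  ∃ S : Set α, IsLowerSet S ∧ Sᶜ.Nonempty ∧ (∀ a ∈ S, ∀ b ∈ Sᶜ, a < b) ∧
    Nonempty (S ≃o P)

/-!
If `S` is the past of an `A`-break, every element outside `S` lies above all of `S`, so a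
downward-closed set with `|A| + 1` elements is `S` together with one element above it, i.e. a
copy of `Â`; such a set exists because a minimal element of the complement of `S` can be added.

Conversely, removing the top of an `(|A| + 1)`-stem `T ≃o Â` leaves a stem `S ≃o A`. Each
minimal element `m` of the complement of `S` gives the stem `S ∪ {m}`, whose top must be `m`;
hence `S` lies below every minimal element of its complement, and by local finiteness every
element of the complement lies above such a minimal element.
-/

open Set

variable {α β : Type*} [PartialOrder α] [PartialOrder β]

theorem IsLowerSet.exists_le_isLowerSet_insert {S : Set α} (hS : IsLowerSet S) {b : α}
    (hb : b ∉ S) (hfin : (Iic b).Finite) : ∃ m ≤ b, m ∉ S ∧ IsLowerSet (insert m S) := by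
  obtain ⟨m, -, hmin⟩ := (hfin.inter_of_left Sᶜ).exists_le_minimal ⟨le_rfl, hb⟩
  refine ⟨m, hmin.prop.1, hmin.prop.2, ?_⟩
  rintro x y hyx (rfl | hx)
  · by_cases hy : y ∈ S
    · exact mem_insert_of_mem _ hy
    · exact Or.inl (hmin.eq_of_le ⟨hyx.trans hmin.prop.1, hy⟩ hyx)
  · exact mem_insert_of_mem _ (hS hyx hx)

theorem IsLowerSet.lt_of_forall_isLowerSet_insert {S : Set α} (hS : IsLowerSet S)
    (hlf : ∀ x : α, (Iic x).Finite)
    (h : ∀ m ∉ S, IsLowerSet (insert m S) → ∀ a ∈ S, a ≤ m) :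
    ∀ a ∈ S, ∀ b ∉ S, a < b := by
  intro a ha b hb
  obtain ⟨m, hmb, hm, hlow⟩ := hS.exists_le_isLowerSet_insert hb (hlf b)
  exact ((h m hm hlow a ha).trans hmb).lt_of_ne (ne_of_mem_of_not_mem ha hb)

theorem eq_insert_of_isLowerSet_of_ncard_eq {S T : Set α} (hS : S.Finite)
    (hbreak : ∀ a ∈ S, ∀ b ∉ S, a < b) (hT : IsLowerSet T) (hcard : T.ncard = S.ncard + 1) :
    ∃ t ∉ S, T = insert t S := by
  have hTfin : T.Finite := finite_of_ncard_ne_zero (by omega)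
  obtain ⟨t, htT, htS⟩ := not_subset.mp fun hTS : T ⊆ S => by
    have := ncard_le_ncard hTS hS
    omega
  have hST : S ⊆ T := fun a ha => hT (hbreak a ha t htS).le htT
  refine ⟨t, htS, (eq_of_subset_of_ncard_le (insert_subset htT hST) ?_ hTfin).symm⟩
  rw [ncard_insert_of_notMem htS hS, hcard]

theorem nonempty_insert_orderIso_withTop {S : Set α} {t : α} (ht : ∀ a ∈ S, a < t)
    (f : S ≃o β) : Nonempty ((insert t S : Set α) ≃o WithTop β) := by
  let g : WithTop S ↪o α := OrderEmbedding.ofMapLEIff (WithTop.recTopCoe t (↑)) fun a b => by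
    induction a using WithTop.recTopCoe <;> induction b using WithTop.recTopCoe
    · simp
    · simpa using (ht _ (Subtype.prop _)).not_ge
    · simpa using (ht _ (Subtype.prop _)).le
    · simp
  have hg : range g = insert t S := by
    ext x
    simp [g, WithTop.exists, eq_comm]
  exact ⟨(OrderIso.setCongr _ _ hg.symm).trans (g.orderIso.symm.trans f.withTopCongr)⟩

theorem isGreatest_coe_symm_top {T : Set α} (e : T ≃o WithTop β) :
    IsGreatest T ((e.symm ⊤ : T) : α) :=
  ⟨(e.symm ⊤).2, fun x hx => (e.le_symm_apply (x := ⟨x, hx⟩)).2 le_top⟩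

theorem nonempty_sdiff_coe_symm_top_orderIso {T : Set α} (e : T ≃o WithTop β) :
    Nonempty ((T \ {((e.symm ⊤ : T) : α)} : Set α) ≃o β) := by
  let g : β ↪o α :=
    WithTop.coeOrderHom.trans (e.symm.toOrderEmbedding.trans (OrderEmbedding.subtype T))
  have hg : range g = T \ {((e.symm ⊤ : T) : α)} := by
    ext x
    simp only [mem_range, mem_sdiff, mem_singleton_iff]
    constructor
    · rintro ⟨b, rfl⟩
      exact ⟨(e.symm b).2, fun h => WithTop.coe_ne_top (e.symm.injective (Subtype.ext h))⟩
    · rintro ⟨hx, hxt⟩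
      obtain ⟨b, hb⟩ := WithTop.ne_top_iff_exists.mp fun h : e ⟨x, hx⟩ = ⊤ =>
        hxt (congrArg Subtype.val (e.eq_symm_apply.mpr h))
      exact ⟨b, congrArg Subtype.val (e.symm_apply_eq.mpr hb)⟩
  exact ⟨(OrderIso.setCongr _ _ hg.symm).trans g.orderIso.symm⟩

theorem IsLowerSet.forall_le_of_insert_orderIso_withTop {S : Set α} (hS : IsLowerSet S)
    {m : α} (hm : m ∉ S) (e : (insert m S : Set α) ≃o WithTop β) : ∀ a ∈ S, a ≤ m := by
  obtain ⟨hu, hle_u⟩ := isGreatest_coe_symm_top e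
  rcases hu with hu | hu
  · exact fun a ha => hu ▸ hle_u (mem_insert_of_mem m ha)
  · exact absurd (hS (hle_u (mem_insert m S)) hu) hm

theorem containsBreak_iff_unique_cover_stem_general
    {α : Type} [PartialOrder α]
    (hlf : ∀ x : α, {y : α | y ≤ x}.Finite)
    (A : Type) [PartialOrder A] [Fintype A] :
    ContainsBreak α A ↔
      ((∃ T : Set α, IsLowerSet T ∧ T.ncard = Fintype.card A + 1) ∧
       ∀ T : Set α, IsLowerSet T → T.ncard = Fintype.card A + 1 →
         Nonempty (T ≃o WithTop A)) := by
  constructor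
  · rintro ⟨S, hS, ⟨b, hb⟩, hbreak, ⟨f⟩⟩
    have : Finite S := .of_equiv A f.symm.toEquiv
    have hScard : S.ncard = Fintype.card A := by
      rw [← Nat.card_coe_set_eq, Nat.card_congr f.toEquiv, Nat.card_eq_fintype_card]
    obtain ⟨m, -, hm, hlow⟩ := hS.exists_le_isLowerSet_insert hb (hlf b)
    refine ⟨⟨insert m S, hlow, by rw [ncard_insert_of_notMem hm, hScard]⟩, fun T hT hTcard => ?_⟩
    obtain ⟨t, htS, rfl⟩ := eq_insert_of_isLowerSet_of_ncard_eq (toFinite S) hbreak hT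
      (hScard ▸ hTcard)
    exact nonempty_insert_orderIso_withTop (fun a ha => hbreak a ha t htS) f
  · rintro ⟨⟨T, hT, hTcard⟩, huniq⟩
    obtain ⟨e⟩ := huniq T hT hTcard
    set t : α := ((e.symm ⊤ : T) : α)
    obtain ⟨htT, hle_t⟩ := isGreatest_coe_symm_top e
    have hTfin : T.Finite := finite_of_ncard_ne_zero (by omega)
    have hS : IsLowerSet (T \ {t}) := hT.erase fun x hx htx => le_antisymm (hle_t hx) htx
    refine ⟨T \ {t}, hS, ⟨t, fun h => h.2 rfl⟩, hS.lt_of_forall_isLowerSet_insert hlf ?_,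
      nonempty_sdiff_coe_symm_top_orderIso e⟩
    intro m hm hlow
    have hcard : (insert m (T \ {t})).ncard = Fintype.card A + 1 := by
      rw [ncard_insert_of_notMem hm hTfin.sdiff, ncard_sdiff_singleton_add_one htT hTfin, hTcard]
    exact (huniq _ hlow hcard).elim (hS.forall_le_of_insert_orderIso_withTop hm)

/-- An infinite order `C` contains an `A`-break if and only if the covering
order `Â` (modelled as `WithTop A`) is the unique `(|A|+1)`-stem of `C`:
there is a downward-closed subset of cardinality `|A|+1`, and every such
subset is order-isomorphic to `Â`. -/
theorem containsBreak_iff_unique_cover_stem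
    {α : Type} [PartialOrder α] [Countable α] [Infinite α]
    (hlf : ∀ x : α, {y : α | y ≤ x}.Finite)
    (A : Type) [PartialOrder A] [Fintype A] :
    ContainsBreak α A ↔
      ((∃ T : Set α, IsLowerSet T ∧ T.ncard = Fintype.card A + 1) ∧
       ∀ T : Set α, IsLowerSet T → T.ncard = Fintype.card A + 1 →
         Nonempty (T ≃o WithTop A)) :=
  containsBreak_iff_unique_cover_stem_general hlf A
end

section
/- Let C be a finite poset that is Newtonian (every element of level k is above every element of level k−1). Then for every n ≤ |C|, any two downward-closed subsets of C of cardinality n are order-isomorphic. -/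
open Set

theorem level_strictMono {α : Type*} [PartialOrder α] [Finite α] : StrictMono (level : α → ℕ∞) := by
  intro x y hxy
  obtain ⟨t, htx, ht_card, ht_chain⟩ :=
    exists_eq_chainHeight_of_finite {z | z ≤ x} (· < ·) (toFinite _)
  have hy : y ∉ t := fun hyt => (hxy.trans_le (htx hyt)).false
  -- Appending `y` on top of a longest chain below `x` gives a longer chain below `y`.
  have hlong : level x + 1 ≤ level y := by
    rw [level, ← ht_card, ← encard_insert_of_notMem hy]
    refine encard_le_chainHeight_of_isChain _ _ ?_
      (ht_chain.insert fun z hz _ => Or.inr ((htx hz).trans_lt hxy))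
    exact insert_subset le_rfl fun z hz => (htx hz).trans hxy.le
  have hx : level x ≠ ⊤ := chainHeight_ne_top_of_finite _ _ (toFinite _)
  exact ((ENat.lt_add_one_iff hx).2 le_rfl).trans_le hlong

theorem exists_equiv_map_eq_of_ncard_inter_fiber_eq {α β : Type*} [Finite α] {f : α → β}
    {S T : Set α} (h : ∀ c, (S ∩ f ⁻¹' {c}).ncard = (T ∩ f ⁻¹' {c}).ncard) :
    ∃ e : S ≃ T, ∀ a, f (e a) = f a := by
  have hfib : ∀ c, Nonempty ({a : S // f a = c} ≃ {b : T // f b = c}) := fun c => by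
    have fiber : ∀ U : Set α, {a : U // f a = c} ≃ ↥(U ∩ f ⁻¹' {c}) := fun U =>
      Equiv.subtypeSubtypeEquivSubtypeInter (· ∈ U) (fun x => f x = c)
    rw [← Finite.card_eq, Nat.card_congr (fiber S), Nat.card_congr (fiber T),
      Nat.card_coe_set_eq, Nat.card_coe_set_eq]
    exact h c
  exact ⟨Equiv.ofFiberEquiv fun c => (hfib c).some,
    Equiv.ofFiberEquiv_map (f := fun a : S => f a) (g := fun b : T => f b) _⟩

section
variable {α β : Type*} [PartialOrder α] [LinearOrder β] {f : α → β}

theorem le_iff_eq_or_lt_of_strictMono (hf : StrictMono f) (hN : ∀ x y, f y < f x → y < x)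
    {x y : α} : x ≤ y ↔ x = y ∨ f x < f y := by
  refine ⟨fun h => h.eq_or_lt.imp id (@hf _ _), ?_⟩
  rintro (rfl | h)
  exacts [le_rfl, (hN y x h).le]

theorem IsLowerSet.preimage_subset_or_subset (hN : ∀ x y, f y < f x → y < x) {U : Set α}
    (hU : IsLowerSet U) {I : Set β} (hI : IsLowerSet I) : f ⁻¹' I ⊆ U ∨ U ⊆ f ⁻¹' I := by
  refine or_iff_not_imp_left.2 fun hIU s hs => ?_
  obtain ⟨b, hbI, hbU⟩ := not_subset.1 hIU
  by_contra hsI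
  have hbs : f b < f s := lt_of_not_ge fun h => hsI (hI h hbI)
  exact hbU (hU (hN s b hbs).le hs)

theorem IsLowerSet.ncard_inter_preimage [Finite α] (hN : ∀ x y, f y < f x → y < x) {U : Set α}
    (hU : IsLowerSet U) {I : Set β} (hI : IsLowerSet I) :
    (U ∩ f ⁻¹' I).ncard = min U.ncard (f ⁻¹' I).ncard := by
  rcases hU.preimage_subset_or_subset hN hI with h | h
  · rw [inter_eq_self_of_subset_right h, min_eq_right (ncard_le_ncard h)]
  · rw [inter_eq_self_of_subset_left h, min_eq_left (ncard_le_ncard h)]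

theorem IsLowerSet.ncard_inter_fiber_eq [Finite α] (hN : ∀ x y, f y < f x → y < x)
    {S T : Set α} (hS : IsLowerSet S) (hT : IsLowerSet T) (hST : S.ncard = T.ncard) (c : β) :
    (S ∩ f ⁻¹' {c}).ncard = (T ∩ f ⁻¹' {c}).ncard := by
  have hcut : ∀ {I : Set β}, IsLowerSet I → (S ∩ f ⁻¹' I).ncard = (T ∩ f ⁻¹' I).ncard :=
    fun hI => by rw [hS.ncard_inter_preimage hN hI, hT.ncard_inter_preimage hN hI, hST]
  have hfiber : ∀ U : Set α, (U ∩ f ⁻¹' {c}).ncard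
      = (U ∩ f ⁻¹' Iic c).ncard - (U ∩ f ⁻¹' Iio c).ncard := fun U => by
    rw [← ncard_sdiff (inter_subset_inter_right _ (preimage_mono Iio_subset_Iic_self)),
      ← inter_sdiff_distrib_left, ← preimage_sdiff, Iic_sdiff_Iio_same]
  rw [hfiber, hfiber, hcut (isLowerSet_Iic c), hcut (isLowerSet_Iio c)]

theorem IsLowerSet.nonempty_orderIso_of_ncard_eq [Finite α] (hf : StrictMono f)
    (hN : ∀ x y, f y < f x → y < x) {S T : Set α} (hS : IsLowerSet S) (hT : IsLowerSet T)
    (hST : S.ncard = T.ncard) : Nonempty (S ≃o T) := by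
  obtain ⟨e, he⟩ := exists_equiv_map_eq_of_ncard_inter_fiber_eq (hS.ncard_inter_fiber_eq hN hT hST)
  refine ⟨⟨e, fun {a b} => ?_⟩⟩
  change (e a : α) ≤ e b ↔ (a : α) ≤ b
  simp only [le_iff_eq_or_lt_of_strictMono hf hN, he, Subtype.coe_inj, e.apply_eq_iff_eq]

end

theorem newtonian_implies_stems_iso_general
    {α : Type} [PartialOrder α] [Fintype α]
    (hN : ∀ x y : α, level y < level x → y < x)
    (n : ℕ)
    (S T : Set α) (hS : IsLowerSet S) (hT : IsLowerSet T)
    (hSc : S.ncard = n) (hTc : T.ncard = n) :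
    Nonempty (S ≃o T) :=
  hS.nonempty_orderIso_of_ncard_eq level_strictMono hN hT (hSc.trans hTc.symm)

/-- In a finite Newtonian poset, any two downward-closed subsets of the same
cardinality `n ≤ |C|` are order-isomorphic. -/
theorem newtonian_implies_stems_iso
    {α : Type} [PartialOrder α] [Fintype α]
    (hN : ∀ x y : α, level y < level x → y < x)
    (n : ℕ) (hn : n ≤ Fintype.card α)
    (S T : Set α) (hS : IsLowerSet S) (hT : IsLowerSet T)
    (hSc : S.ncard = n) (hTc : T.ncard = n) :
    Nonempty (S ≃o T) :=
  newtonian_implies_stems_iso_general hN n S T hS hT hSc hTc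
end

section
/- Let A be a finite poset and let C, C' be posets with A ⊕ C ≅ A ⊕ C'. Then C ≅ C'. (Cancellation of a finite past across an ordinal sum.) -/
/-!
An order isomorphism `f : A ⊕ₗ C ≃o A ⊕ₗ C'` must send the `C`-part into the `C'`-part: if
`f (inr c) = inl a₀`, then `f` maps every `inl a ≤ inr c` to some `inl (g a)` with `g a ≠ a₀`,
and `g : A → A` would be injective but not surjective, impossible for finite `A`. Applying this
to `f` and `f.symm`, the isomorphism restricts to `C ≃o C'`.
-/

open Function Sum

namespace OrderIso

variable {A C C' : Type*} [LE A] [LE C] [LE C'] [Finite A]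

lemma exists_apply_sumLex_inr_eq_inr (f : A ⊕ₗ C ≃o A ⊕ₗ C') (c : C) :
    ∃ c', f (toLex (inr c)) = toLex (inr c') := by
  rcases hfc : ofLex (f (toLex (inr c))) with a₀ | c'
  · replace hfc : f (toLex (inr c)) = toLex (inl a₀) := congrArg toLex hfc
    have maps_inl (a : A) : ∃ b, f (toLex (inl a)) = toLex (inl b) := by
      have hle : f (toLex (inl a)) ≤ toLex (inl a₀) := hfc ▸ f.le_iff_le.2 (Lex.inl_le_inr a c)
      rcases hfa : ofLex (f (toLex (inl a))) with b | c''
      · exact ⟨b, congrArg toLex hfa⟩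
      · exact absurd (congrArg toLex hfa ▸ hle) Lex.not_inr_le_inl
    choose g hg using maps_inl
    have g_injective : Injective g := fun a b hab =>
      inl_injective <| toLex.injective <| f.injective <| by rw [hg, hg, hab]
    obtain ⟨a, rfl⟩ := Finite.surjective_of_injective g_injective a₀
    exact absurd (toLex.injective <| f.injective <| (hg a).trans hfc.symm) inl_ne_inr
  · exact ⟨c', congrArg toLex hfc⟩

noncomputable def sumLexInrMap (f : A ⊕ₗ C ≃o A ⊕ₗ C') (c : C) : C' :=
  (f.exists_apply_sumLex_inr_eq_inr c).choose

lemma apply_sumLex_inr (f : A ⊕ₗ C ≃o A ⊕ₗ C') (c : C) :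
    f (toLex (inr c)) = toLex (inr (f.sumLexInrMap c)) :=
  (f.exists_apply_sumLex_inr_eq_inr c).choose_spec

noncomputable def sumLexCancelLeft (f : A ⊕ₗ C ≃o A ⊕ₗ C') : C ≃o C' where
  toFun := f.sumLexInrMap
  invFun := f.symm.sumLexInrMap
  left_inv c := inr_injective <| toLex.injective <| by
    rw [← apply_sumLex_inr, ← apply_sumLex_inr, symm_apply_apply]
  right_inv c' := inr_injective <| toLex.injective <| by
    rw [← apply_sumLex_inr, ← apply_sumLex_inr, apply_symm_apply]
  map_rel_iff' {c d} := by
    rw [Equiv.coe_fn_mk, ← Lex.inr_le_inr_iff (α := A), ← apply_sumLex_inr, ← apply_sumLex_inr,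
      f.le_iff_le, Lex.inr_le_inr_iff]

end OrderIso

theorem ordinal_sum_cancel_general {A C C' : Type} [PartialOrder A] [Fintype A]
    [PartialOrder C] [PartialOrder C']
    (h : Nonempty ((A ⊕ₗ C) ≃o (A ⊕ₗ C'))) :
    Nonempty (C ≃o C') :=
  h.map OrderIso.sumLexCancelLeft

/-- Cancellation of a finite past across an ordinal sum: if `A` is a finite
poset and `A ⊕ C ≅ A ⊕ C'` for (finite or countably infinite) posets
`C`, `C'`, then `C ≅ C'`. -/
theorem ordinal_sum_cancel {A C C' : Type} [PartialOrder A] [Fintype A]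
    [PartialOrder C] [Countable C] [PartialOrder C'] [Countable C']
    (h : Nonempty ((A ⊕ₗ C) ≃o (A ⊕ₗ C'))) :
    Nonempty (C ≃o C') :=
  ordinal_sum_cancel_general h
end

section
/- Let C̃ be a labeled causet containing a break with past Ã, where |Ã| = n. Then Ã equals the union of all downward-closed subsets of C̃ of cardinality at most n; consequently the past of a break of a given cardinality, if it exists, is unique as a subset. -/
/-- If a labeled causet contains a break with past `Ã` of cardinality `n`,
then `Ã` is the union of all stems of cardinality at most `n`; consequently
the past of a break of cardinality `n` is unique as a subset. -/
theorem break_past_eq_union_of_small_stems (C : LCauset) (A : Finset ℕ) (n : ℕ)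
    (hbrk : C.BreakPast A) (hcard : A.card = n) :
    (↑A : Set ℕ) = {x : ℕ | ∃ S : Finset ℕ, C.IsStem S ∧ S.card ≤ n ∧ x ∈ S} ∧
    ∀ A' : Finset ℕ, C.BreakPast A' → A'.card = n → A' = A := by
  obtain ⟨hstem, _, hrel⟩ := hbrk
  have key : (↑A : Set ℕ) = {x : ℕ | ∃ S : Finset ℕ, C.IsStem S ∧ S.card ≤ n ∧ x ∈ S} := by
    ext x
    constructor
    · intro hx
      exact ⟨A, hstem, hcard.le, hx⟩
    · rintro ⟨S, hS, hScard, hxS⟩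
      by_contra hxA
      -- x ∈ S, x ∉ A; every a ∈ A relates to x, so A ⊆ S
      have hxC : x ∈ C.carrier := hS.1 hxS
      have hAS : A ⊆ S := by
        intro a ha
        exact hS.2 a x hxS (hrel a ha x hxC hxA)
      have : A.card < S.card :=
        Finset.card_lt_card ⟨hAS, fun h => hxA (h hxS)⟩
      omega
  refine ⟨key, fun A' hbrk' hcard' => ?_⟩
  have hA'sub : A' ⊆ A := by
    intro x hx
    have : x ∈ {x : ℕ | ∃ S : Finset ℕ, C.IsStem S ∧ S.card ≤ n ∧ x ∈ S} :=
      ⟨A', hbrk'.1, hcard'.le, hx⟩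
    rw [← key] at this
    exact this
  exact Finset.eq_of_subset_of_card_le hA'sub (by omega)
end

section
/- Let A, B be finite posets of the same cardinality n with A ≇ B, and suppose there exists a finite poset Ẽ of minimal cardinality such that the set of isomorphism classes of n-element downward-closed subsets of Ẽ is exactly {[A], [B]}. If Ẽ equals the union of a downward-closed copy of A and a downward-closed copy of B, then these two copies intersect in a common downward-closed subset of cardinality n−1; in particular A and B share a common stem of cardinality n−1. -/
/-- `E` is a certificate of the doublet `{A, B}`: the isomorphism classes of
its `n`-element downward-closed subsets are exactly `{[A], [B]}`. -/
def IsDoubletCert (A B E : Type) [PartialOrder A] [Fintype A]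
    [PartialOrder B] [Fintype B] [PartialOrder E] [Fintype E] (n : ℕ) : Prop :=
  (∀ S : Set E, IsLowerSet S → S.ncard = n →
    Nonempty (S ≃o A) ∨ Nonempty (S ≃o B)) ∧
  (∃ S : Set E, IsLowerSet S ∧ S.ncard = n ∧ Nonempty (S ≃o A)) ∧
  (∃ S : Set E, IsLowerSet S ∧ S.ncard = n ∧ Nonempty (S ≃o B))

/-!
Let `k = |SA ∩ SB|`, so `|Ẽ| = 2n - k`, and `k < n` because `A ≇ B`. If `k ≤ n - 2`, pick `x`
maximal in `SA \ SB` and `y` maximal in `SB \ SA`; both are maximal in `Ẽ`, and `Ẽ \ {x, y}`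
still has an `n`-stem `W`. If `W ≅ A`, then `Ẽ \ {x}` is a stem containing the copies `W` of `A`
and `SB` of `B`, hence a smaller certificate; symmetrically if `W ≅ B`. So `k = n - 1`, and
`SA ∩ SB`, pulled back to `A` and to `B`, is the common `(n-1)`-stem.
-/

open Set

section Stems

variable {α β : Type*} [PartialOrder α] [PartialOrder β]

noncomputable def OrderEmbedding.orderIsoImage (f : α ↪o β) (s : Set α) : s ≃o f '' s where
  toEquiv := Equiv.Set.image f s f.injective
  map_rel_iff' := f.le_iff_le

theorem IsMax.isUpperSet_singleton {a : α} (ha : IsMax a) : IsUpperSet ({a} : Set α) := by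
  rintro b c hbc rfl
  exact (ha hbc).antisymm hbc

theorem isMax_of_maximal_diff {s t : Set α} (hst : s ∪ t = univ) (ht : IsLowerSet t) {x : α}
    (hx : Maximal (· ∈ s \ t) x) : IsMax x := by
  intro w hxw
  have hwt : w ∉ t := fun hw => hx.prop.2 (ht hxw hw)
  have hws : w ∈ s := ((hst ▸ mem_univ w : w ∈ s ∪ t)).resolve_right hwt
  exact hx.2 ⟨hws, hwt⟩ hxw

theorem IsLowerSet.image_val {V : Set α} (hV : IsLowerSet V) {U : Set V} (hU : IsLowerSet U) :
    IsLowerSet (Subtype.val '' U) := by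
  rintro a b hba ⟨u, hu, rfl⟩
  exact ⟨⟨b, hV hba u.2⟩, hU hba hu, rfl⟩

theorem IsLowerSet.exists_orderIso_of_subset {S T : Set α} (hT : IsLowerSet T) (hTS : T ⊆ S)
    (f : S ≃o β) : ∃ T' : Set β, IsLowerSet T' ∧ Nonempty (T' ≃o T) := by
  set U : Set S := Subtype.val ⁻¹' T
  have hU : Subtype.val '' U = T := by
    rw [Subtype.image_preimage_coe, inter_eq_right.2 hTS]
  refine ⟨f '' U, (hT.preimage (Subtype.mono_coe _)).image f, ⟨?_⟩⟩
  exact (f.toOrderEmbedding.orderIsoImage U).symm.trans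
    (((OrderEmbedding.subtype (· ∈ S)).orderIsoImage U).trans (OrderIso.setCongr _ _ hU))

theorem IsLowerSet.exists_subset_ncard_eq [Finite α] {V : Set α} (hV : IsLowerSet V) {m : ℕ}
    (hm : m ≤ V.ncard) : ∃ S ⊆ V, IsLowerSet S ∧ S.ncard = m := by
  induction m with
  | zero => exact ⟨∅, empty_subset V, isLowerSet_empty, ncard_empty α⟩
  | succ m ih =>
    obtain ⟨S, hSV, hS, hSm⟩ := ih (by omega)
    have hne : (V \ S).Nonempty :=
      sdiff_nonempty.2 fun hVS => by have := ncard_le_ncard hVS; omega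
    obtain ⟨z, hz⟩ := (toFinite _).exists_minimal hne
    refine ⟨insert z S, insert_subset hz.prop.1 hSV, ?_, ?_⟩
    · rintro a b hba (rfl | haS)
      · by_cases hbS : b ∈ S
        · exact mem_insert_of_mem _ hbS
        · exact (hz.2 ⟨hV hba hz.prop.1, hbS⟩ hba).antisymm hba ▸ mem_insert _ _
      · exact mem_insert_of_mem _ (hS hba haS)
    · rw [ncard_insert_of_notMem hz.prop.2, hSm]

end Stems

theorem Set.ncard_inter_lt_of_ne {α : Type*} [Finite α] {s t : Set α} {n : ℕ}
    (hs : s.ncard = n) (ht : t.ncard = n) (hst : s ≠ t) : (s ∩ t).ncard < n := by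
  have hsub : ¬ s ⊆ t := fun h => hst (eq_of_subset_of_ncard_le h (ht.trans hs.symm).le)
  exact hs ▸ ncard_lt_ncard (inter_ssubset_left_iff.2 hsub)

section Certificates

variable {E : Type} [PartialOrder E] {n : ℕ}

def HasStemIn (X : Type) [PartialOrder X] (V : Set E) (n : ℕ) : Prop :=
  ∃ S ⊆ V, IsLowerSet S ∧ S.ncard = n ∧ Nonempty (S ≃o X)

theorem HasStemIn.exists_stem_subtype {X : Type} [PartialOrder X] {V : Set E}
    (h : HasStemIn X V n) :
    ∃ U : Set V, IsLowerSet U ∧ U.ncard = n ∧ Nonempty (U ≃o X) := by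
  obtain ⟨S, hSV, hS, hSn, ⟨f⟩⟩ := h
  obtain ⟨U, hU, ⟨e⟩⟩ := hS.exists_orderIso_of_subset hSV (OrderIso.refl V)
  exact ⟨U, hU, (ncard_congr' e.toEquiv).trans hSn, ⟨e.trans f⟩⟩

variable {A B : Type} [PartialOrder A] [Fintype A] [PartialOrder B] [Fintype B] [Fintype E]

theorem IsDoubletCert.of_isLowerSet (hcert : IsDoubletCert A B E n) {V : Set E}
    (hV : IsLowerSet V) [Fintype V] (hA : HasStemIn A V n) (hB : HasStemIn B V n) :
    IsDoubletCert A B V n := by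
  refine ⟨fun U hU hUn => ?_, hA.exists_stem_subtype, hB.exists_stem_subtype⟩
  have e := (OrderEmbedding.subtype (· ∈ V)).orderIsoImage U
  exact (hcert.1 _ (hV.image_val hU) ((ncard_congr' e.toEquiv).symm.trans hUn)).imp
    (fun ⟨f⟩ => ⟨e.trans f⟩) (fun ⟨f⟩ => ⟨e.trans f⟩)

theorem IsDoubletCert.not_hasStemIn_compl_singleton (hcert : IsDoubletCert A B E n)
    (hmin : ∀ (E' : Type) [PartialOrder E'] [Fintype E'],
      IsDoubletCert A B E' n → Fintype.card E ≤ Fintype.card E')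
    {z : E} (hz : IsMax z) : ¬ (HasStemIn A {z}ᶜ n ∧ HasStemIn B {z}ᶜ n) := by
  rintro ⟨hA, hB⟩
  have := Fintype.ofFinite ({z}ᶜ : Set E)
  have hle := hmin _ (hcert.of_isLowerSet (isLowerSet_compl.2 hz.isUpperSet_singleton) hA hB)
  have hlt : Nat.card ({z}ᶜ : Set E) < Nat.card E := Finite.card_subtype_lt (x := z) (by simp)
  rw [Nat.card_eq_fintype_card, Nat.card_eq_fintype_card] at hlt
  omega

theorem IsDoubletCert.le_ncard_inter_add_one (hcert : IsDoubletCert A B E n)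
    (hmin : ∀ (E' : Type) [PartialOrder E'] [Fintype E'],
      IsDoubletCert A B E' n → Fintype.card E ≤ Fintype.card E')
    {SA SB : Set E} (hSA : IsLowerSet SA) (hSB : IsLowerSet SB) (hnA : SA.ncard = n)
    (hnB : SB.ncard = n) (hiA : Nonempty (SA ≃o A)) (hiB : Nonempty (SB ≃o B))
    (hunion : SA ∪ SB = univ) : n ≤ (SA ∩ SB).ncard + 1 := by
  by_contra! hlt
  have hAB : (SA \ SB).Nonempty :=
    sdiff_nonempty.2 fun h => by rw [inter_eq_left.2 h] at hlt; omega
  have hBA : (SB \ SA).Nonempty :=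
    sdiff_nonempty.2 fun h => by rw [inter_eq_right.2 h] at hlt; omega
  obtain ⟨x, hx⟩ := (toFinite _).exists_maximal hAB
  obtain ⟨y, hy⟩ := (toFinite _).exists_maximal hBA
  have hxmax := isMax_of_maximal_diff hunion hSB hx
  have hymax := isMax_of_maximal_diff (union_comm SA SB ▸ hunion) hSA hy
  have hxy : x ≠ y := fun h => hy.prop.2 (h ▸ hx.prop.1)
  have hV : IsLowerSet ({x, y} : Set E)ᶜ := by
    rw [isLowerSet_compl, insert_eq]
    exact hxmax.isUpperSet_singleton.union hymax.isUpperSet_singleton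
  have hVcard : n ≤ ({x, y} : Set E)ᶜ.ncard := by
    have hE := ncard_add_ncard_compl ({x, y} : Set E)
    have hE' := ncard_union_add_ncard_inter SA SB
    rw [ncard_pair hxy] at hE
    rw [hunion, ncard_univ, hnA, hnB] at hE'
    omega
  obtain ⟨W, hWV, hW, hWn⟩ := hV.exists_subset_ncard_eq hVcard
  have hWx : W ⊆ {x}ᶜ := hWV.trans (compl_subset_compl.2 (by simp))
  have hWy : W ⊆ {y}ᶜ := hWV.trans (compl_subset_compl.2 (by simp))
  rcases hcert.1 W hW hWn with hWA | hWB
  · have hSBx : SB ⊆ {x}ᶜ := subset_compl_singleton_iff.2 hx.prop.2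
    exact hcert.not_hasStemIn_compl_singleton hmin hxmax
      ⟨⟨W, hWx, hW, hWn, hWA⟩, ⟨SB, hSBx, hSB, hnB, hiB⟩⟩
  · have hSAy : SA ⊆ {y}ᶜ := subset_compl_singleton_iff.2 hy.prop.2
    exact hcert.not_hasStemIn_compl_singleton hmin hymax
      ⟨⟨SA, hSAy, hSA, hnA, hiA⟩, ⟨W, hWy, hW, hWn, hWB⟩⟩

end Certificates

/-- If `Ẽ` is a minimal-cardinality certificate of the doublet `{A, B}`
(`A ≇ B`, both of cardinality `n`) and `Ẽ` is the union of downward-closed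
copies of `A` and `B`, then these copies meet in a downward-closed subset of
cardinality `n - 1`; in particular `A` and `B` share an `(n-1)`-stem. -/
theorem doublet_certificate_common_stem
    {A B E : Type} [PartialOrder A] [Fintype A] [PartialOrder B] [Fintype B]
    [PartialOrder E] [Fintype E] (n : ℕ)
    (hcA : Fintype.card A = n) (hcB : Fintype.card B = n)
    (hAB : IsEmpty (A ≃o B))
    (hcert : IsDoubletCert A B E n)
    (hmin : ∀ (E' : Type) [PartialOrder E'] [Fintype E'],
      IsDoubletCert A B E' n → Fintype.card E ≤ Fintype.card E')
    (SA SB : Set E) (hSA : IsLowerSet SA) (hSB : IsLowerSet SB)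
    (hiA : Nonempty (SA ≃o A)) (hiB : Nonempty (SB ≃o B))
    (hunion : SA ∪ SB = Set.univ) :
    (SA ∩ SB).ncard = n - 1 ∧
    ∃ (TA : Set A) (TB : Set B), IsLowerSet TA ∧ IsLowerSet TB ∧
      TA.ncard = n - 1 ∧ TB.ncard = n - 1 ∧ Nonempty (TA ≃o TB) := by
  obtain ⟨fA⟩ := hiA
  obtain ⟨fB⟩ := hiB
  have hnA : SA.ncard = n := by
    rw [← Nat.card_coe_set_eq, Nat.card_congr fA.toEquiv, Nat.card_eq_fintype_card, hcA]
  have hnB : SB.ncard = n := by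
    rw [← Nat.card_coe_set_eq, Nat.card_congr fB.toEquiv, Nat.card_eq_fintype_card, hcB]
  have hne : SA ≠ SB := fun h => hAB.false (fA.symm.trans ((OrderIso.setCongr SA SB h).trans fB))
  have hlt := ncard_inter_lt_of_ne hnA hnB hne
  have hle := hcert.le_ncard_inter_add_one hmin hSA hSB hnA hnB ⟨fA⟩ ⟨fB⟩ hunion
  have hk : (SA ∩ SB).ncard = n - 1 := by omega
  obtain ⟨TA, hTA, ⟨eA⟩⟩ := (hSA.inter hSB).exists_orderIso_of_subset inter_subset_left fA
  obtain ⟨TB, hTB, ⟨eB⟩⟩ := (hSA.inter hSB).exists_orderIso_of_subset inter_subset_right fB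
  exact ⟨hk, TA, TB, hTA, hTB, (ncard_congr' eA.toEquiv).trans hk,
    (ncard_congr' eB.toEquiv).trans hk, ⟨eA.trans eB.symm⟩⟩
end
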